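/- arXiv:2007.03731 — 5 statements merged into one kernel-verified Lean document; each statement's English description precedes it below -/
import Mathlib

section
/- Let k be a natural number, p, δ ∈ (0,1), and let N = ⌈(k + 2·ln(1/δ) + √(2k·ln(1/δ)))/p⌉. If X is a binomial random variable with N trials and success probability p, then Pr[X ≤ k] ≤ δ. -/
open Finset Real

/-! Chernoff's argument: weighting the terms of the lower tail by `exp (t * (k - i)) ≥ 1` bounds
it by `exp (t * k) * (p * exp (-t) + 1 - p) ^ N`, the moment generating function of `-X` at `t`,
which is at most `exp (t * k + μ * (exp (-t) - 1))` with `μ = N * p`. With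
`exp (-t) ≤ 1 - t + t ^ 2 / 2` and the choice `t = (μ - k) / μ` this gives
`Pr[X ≤ k] ≤ exp (-(μ - k) ^ 2 / (2 * μ))`, and the choice of `N` makes
`(μ - k) ^ 2 ≥ 2 * μ * log (1 / δ)`. -/

lemma exp_neg_le_one_sub_add_sq_div_two {t : ℝ} (ht : 0 ≤ t) : exp (-t) ≤ 1 - t + t ^ 2 / 2 := by
  have hpos : 0 < 1 + t + t ^ 2 / 2 := by positivity
  rw [exp_neg]
  calc (exp t)⁻¹ ≤ (1 + t + t ^ 2 / 2)⁻¹ := inv_anti₀ hpos (quadratic_le_exp_of_nonneg ht)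
    _ ≤ 1 - t + t ^ 2 / 2 := by
      -- `(1 + t + t²/2) * (1 - t + t²/2) = 1 + t⁴/4`
      rw [inv_le_iff_one_le_mul₀ hpos]
      nlinarith [sq_nonneg (t ^ 2)]

lemma binomial_cdf_le_exp_mul_pow {N k : ℕ} {p t : ℝ} (hp0 : 0 ≤ p) (hp1 : p ≤ 1) (ht : 0 ≤ t) :
    ∑ i ∈ range (k + 1), (N.choose i : ℝ) * p ^ i * (1 - p) ^ (N - i) ≤
      exp (t * k) * (p * exp (-t) + (1 - p)) ^ N := by
  set f : ℕ → ℝ := fun i ↦ exp (t * (k - i)) * ((N.choose i : ℝ) * p ^ i * (1 - p) ^ (N - i))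
  have hf : ∀ i, 0 ≤ f i := fun i ↦ by positivity
  calc ∑ i ∈ range (k + 1), (N.choose i : ℝ) * p ^ i * (1 - p) ^ (N - i)
      ≤ ∑ i ∈ range (k + 1), f i := by
        refine sum_le_sum fun i hi ↦ le_mul_of_one_le_left (by positivity) (one_le_exp ?_)
        have : (i : ℝ) ≤ k := by exact_mod_cast Nat.lt_succ_iff.mp (mem_range.mp hi)
        nlinarith
    _ ≤ ∑ i ∈ range (N + 1), f i := by
        rcases le_total k N with hkN | hNk
        · exact sum_le_sum_of_subset_of_nonneg (range_subset_range.2 (by omega)) fun i _ _ ↦ hf i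
        · refine (sum_subset (range_subset_range.2 (by omega)) fun i _ hi ↦ ?_).ge
          simp [f, Nat.choose_eq_zero_of_lt (by simpa using hi : N < i)]
    _ = exp (t * k) * (p * exp (-t) + (1 - p)) ^ N := by
        rw [add_pow, mul_sum]
        refine sum_congr rfl fun i _ ↦ ?_
        have : exp (t * (k - i)) = exp (t * k) * exp (-t) ^ i := by
          rw [← exp_nat_mul, ← exp_add]; ring_nf
        simp only [f, this, mul_pow]
        ring

theorem binomial_cdf_le_exp_neg_sq_div {N k : ℕ} {p : ℝ} (hp0 : 0 ≤ p) (hp1 : p ≤ 1)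
    (hk : (k : ℝ) ≤ N * p) :
    ∑ i ∈ range (k + 1), (N.choose i : ℝ) * p ^ i * (1 - p) ^ (N - i) ≤
      exp (-((N * p - k) ^ 2 / (2 * (N * p)))) := by
  set μ : ℝ := N * p with hμ
  set t : ℝ := (μ - k) / μ
  have ht : 0 ≤ t := div_nonneg (by linarith) (by positivity)
  have hbase : p * exp (-t) + (1 - p) ≤ exp (p * (exp (-t) - 1)) := by
    linarith [add_one_le_exp (p * (exp (-t) - 1))]
  -- junk values make the identity hold also when `μ = 0`
  have hexponent : t * k + μ * (-t + t ^ 2 / 2) = -((μ - k) ^ 2 / (2 * μ)) := by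
    rcases eq_or_ne μ 0 with h0 | h0
    · simp [t, h0]
    · simp only [t]; field_simp; ring
  calc ∑ i ∈ range (k + 1), (N.choose i : ℝ) * p ^ i * (1 - p) ^ (N - i)
      ≤ exp (t * k) * (p * exp (-t) + (1 - p)) ^ N := binomial_cdf_le_exp_mul_pow hp0 hp1 ht
    _ ≤ exp (t * k) * exp (p * (exp (-t) - 1)) ^ N := by gcongr
    _ = exp (t * k + μ * (exp (-t) - 1)) := by
        rw [← exp_nat_mul, ← exp_add, hμ, mul_assoc]
    _ ≤ exp (t * k + μ * (-t + t ^ 2 / 2)) := by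
        gcongr
        linarith [exp_neg_le_one_sub_add_sq_div_two ht]
    _ = exp (-((μ - k) ^ 2 / (2 * μ))) := by rw [hexponent]

lemma two_mul_mul_le_sq_sub {k L μ : ℝ} (hk : 0 ≤ k) (hL : 0 ≤ L)
    (hμ : k + 2 * L + √(2 * k * L) ≤ μ) : 2 * L * μ ≤ (μ - k) ^ 2 := by
  set s := √(2 * k * L)
  have hs : 0 ≤ s := sqrt_nonneg _
  have hs2 : s ^ 2 = 2 * k * L := sq_sqrt (by positivity)
  -- `(μ - k) * (μ - k - 2L) ≥ (2L + s) * s ≥ s² = 2kL`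
  nlinarith [mul_le_mul hμ hμ (by positivity) (by linarith), mul_nonneg hL hs]

theorem stmt_1 (k : ℕ) (p δ : ℝ) (hp : p ∈ Set.Ioo (0 : ℝ) 1) (hδ : δ ∈ Set.Ioo (0 : ℝ) 1)
    (N : ℕ)
    (hN : N = ⌈((k : ℝ) + 2 * Real.log (1 / δ) + Real.sqrt (2 * k * Real.log (1 / δ))) / p⌉₊) :
    ∑ i ∈ Finset.range (k + 1), (N.choose i : ℝ) * p ^ i * (1 - p) ^ (N - i) ≤ δ := by
  obtain ⟨hp0, hp1⟩ := hp
  obtain ⟨hδ0, hδ1⟩ := hδ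
  set L := log (1 / δ)
  have hL : 0 < L := log_pos (by rw [lt_div_iff₀ hδ0]; linarith)
  have hμ : k + 2 * L + √(2 * k * L) ≤ N * p := by
    rw [← div_le_iff₀ hp0, hN]
    exact Nat.le_ceil _
  have hk : (0 : ℝ) ≤ k := Nat.cast_nonneg k
  have hμ0 : 0 < (N : ℝ) * p := by linarith [sqrt_nonneg (2 * k * L)]
  have hkey := two_mul_mul_le_sq_sub hk hL.le hμ
  calc ∑ i ∈ range (k + 1), (N.choose i : ℝ) * p ^ i * (1 - p) ^ (N - i)
      ≤ exp (-((N * p - k) ^ 2 / (2 * (N * p)))) :=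
        binomial_cdf_le_exp_neg_sq_div hp0.le hp1.le (by linarith [sqrt_nonneg (2 * k * L)])
    _ ≤ exp (-L) := by
        gcongr
        rw [le_div_iff₀ (by positivity)]
        linarith
    _ = δ := by rw [show L = -log δ by simp [L], neg_neg, exp_log hδ0]
end

section
/- Consider a coupon-collector process with k coupons, where each sample is an independent uniformly random coupon. After N = k·(Z−1 + ln(k/δ) + √((Z−1 + ln(k/δ))² − (Z−1)²/4)) samples, with probability at least 1−δ every coupon has been collected at least Z times. -/
/-!
Chernoff's method, done by counting. For a coupon `c` and `x = e^{-t} ∈ (0, 1]`, the sum of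
`x ^ (number of copies of c)` over all `k^N` sample sequences is `(x + k - 1)^N ≤ k^N e^{N(x-1)/k}`,
so Markov's inequality and a union bound over the `k` coupons bound the proportion of sequences in
which some coupon appears at most `a = Z - 1` times by `k e^{ta + m(e^{-t}-1)}`, where `m = N/k`.
The choice `e^{-t} = a/m` (or `1/2` if `a = 0`) together with `2 log w ≤ w - w⁻¹` makes the
exponent at most `-log(k/δ)` as soon as `m² - 2(a + log(k/δ)) m + a² ≥ 0`, which the choice of `N`
guarantees.
-/

open Finset Real

theorem two_mul_log_le_sub_inv {w : ℝ} (hw : 1 ≤ w) : 2 * log w ≤ w - w⁻¹ := by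
  have h := self_le_sinh_iff.2 (log_nonneg hw)
  rw [sinh_log (by linarith)] at h
  linarith

theorem exists_exponent_le {a L m : ℝ} (ha : 0 ≤ a) (hL : 0 ≤ L) (hm : a + L ≤ m)
    (hq : 2 * (a + L) * m ≤ m ^ 2 + a ^ 2) :
    ∃ t ≥ 0, t * a + m * (exp (-t) - 1) ≤ -L := by
  rcases ha.eq_or_lt with rfl | ha
  · refine ⟨log 2, log_nonneg one_le_two, ?_⟩
    rw [exp_neg, exp_log two_pos]
    rcases (hL.trans (by linarith : L ≤ m)).eq_or_lt with rfl | hm0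
    · linarith
    · nlinarith
  · have hma : 1 ≤ m / a := (one_le_div ha).2 (by linarith)
    have hm0 : 0 < m := by linarith
    refine ⟨log (m / a), log_nonneg hma, ?_⟩
    rw [exp_neg, exp_log (by positivity), inv_div]
    have hlog := two_mul_log_le_sub_inv hma
    rw [inv_div] at hlog
    have : 2 * (a * m) * log (m / a) ≤ m ^ 2 - a ^ 2 := by
      have h := mul_le_mul_of_nonneg_left hlog (by positivity : 0 ≤ a * m)
      rw [show a * m * (m / a - a / m) = m ^ 2 - a ^ 2 by field_simp] at h
      linarith
    rw [show m * (a / m - 1) = a - m by field_simp]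
    nlinarith

theorem exists_exponent_le_of_add_sqrt_le {a L m : ℝ} (ha : 0 ≤ a) (hL : 0 ≤ L)
    (hm : a + L + √((a + L) ^ 2 - a ^ 2 / 4) ≤ m) :
    ∃ t ≥ 0, t * a + m * (exp (-t) - 1) ≤ -L := by
  have hs := sq_sqrt (show 0 ≤ (a + L) ^ 2 - a ^ 2 / 4 by nlinarith)
  have := sqrt_nonneg ((a + L) ^ 2 - a ^ 2 / 4)
  exact exists_exponent_le ha hL (by linarith) (by nlinarith)

theorem pow_add_sub_one_le_pow_mul_exp {k x : ℝ} (hk : 0 < k) (hx : 0 ≤ x + k - 1) (n : ℕ) :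
    (x + k - 1) ^ n ≤ k ^ n * exp (n * (x - 1) / k) := by
  have h : x + k - 1 ≤ k * exp ((x - 1) / k) := by
    calc x + k - 1 = k * ((x - 1) / k + 1) := by field_simp; ring
      _ ≤ k * exp ((x - 1) / k) := by gcongr; exact add_one_le_exp _
  calc (x + k - 1) ^ n ≤ (k * exp ((x - 1) / k)) ^ n := pow_le_pow_left₀ hx h n
    _ = k ^ n * exp (n * (x - 1) / k) := by rw [mul_pow, ← exp_nat_mul, mul_div_assoc]

section Fibers

variable {ι α : Type*} [Fintype ι] [DecidableEq ι] [Fintype α] [DecidableEq α]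

theorem sum_pow_card_fiber {R : Type*} [CommRing R] (c : α) (x : R) :
    ∑ f : ι → α, x ^ #{i | f i = c} = (x + Fintype.card α - 1) ^ Fintype.card ι := by
  have hprod (f : ι → α) : x ^ #{i | f i = c} = ∏ i, if f i = c then x else 1 := by
    rw [prod_ite, prod_const_one, mul_one, prod_const]
  have hsum : ∑ y : α, (if y = c then x else 1) = x + Fintype.card α - 1 := by
    rw [sum_ite, sum_const, sum_const, filter_eq', if_pos (mem_univ c), filter_ne',
      card_singleton, card_erase_of_mem (mem_univ c), card_univ]
    have : Nonempty α := ⟨c⟩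
    rw [one_smul, nsmul_one, Nat.cast_pred Fintype.card_pos]
    ring
  simp_rw [hprod, ← Fintype.prod_sum (fun (_ : ι) (y : α) => if y = c then x else 1), hsum,
    prod_const, card_univ]

theorem card_fiber_le_mul_pow_le (c : α) (r : ℕ) {x : ℝ} (hx0 : 0 ≤ x) (hx1 : x ≤ 1) :
    (#{f : ι → α | #{i | f i = c} ≤ r} : ℝ) * x ^ r ≤
      (x + Fintype.card α - 1) ^ Fintype.card ι := by
  calc (#{f : ι → α | #{i | f i = c} ≤ r} : ℝ) * x ^ r
      = ∑ f ∈ {f : ι → α | #{i | f i = c} ≤ r}, x ^ r := by rw [sum_const, nsmul_eq_mul]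
    _ ≤ ∑ f ∈ {f : ι → α | #{i | f i = c} ≤ r}, x ^ #{i | f i = c} :=
        sum_le_sum fun f hf => pow_le_pow_of_le_one hx0 hx1 (mem_filter.1 hf).2
    _ ≤ ∑ f : ι → α, x ^ #{i | f i = c} :=
        sum_le_sum_of_subset_of_nonneg (filter_subset _ _) fun _ _ _ => pow_nonneg hx0 _
    _ = (x + Fintype.card α - 1) ^ Fintype.card ι := sum_pow_card_fiber c x

theorem card_exists_fiber_le_mul_pow_le (r : ℕ) {x : ℝ} (hx0 : 0 ≤ x) (hx1 : x ≤ 1) :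
    (#{f : ι → α | ∃ c, #{i | f i = c} ≤ r} : ℝ) * x ^ r ≤
      Fintype.card α * (x + Fintype.card α - 1) ^ Fintype.card ι := by
  have hunion : #{f : ι → α | ∃ c, #{i | f i = c} ≤ r} ≤
      ∑ c : α, #{f : ι → α | #{i | f i = c} ≤ r} := by
    refine (card_le_card fun f hf => ?_).trans card_biUnion_le
    obtain ⟨c, hc⟩ := (mem_filter.1 hf).2
    exact mem_biUnion.2 ⟨c, mem_univ c, mem_filter.2 ⟨mem_univ f, hc⟩⟩
  calc (#{f : ι → α | ∃ c, #{i | f i = c} ≤ r} : ℝ) * x ^ r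
      ≤ ∑ c : α, (#{f : ι → α | #{i | f i = c} ≤ r} : ℝ) * x ^ r := by
        rw [← sum_mul]; gcongr; exact_mod_cast hunion
    _ ≤ ∑ _c : α, (x + Fintype.card α - 1) ^ Fintype.card ι :=
        sum_le_sum fun c _ => card_fiber_le_mul_pow_le c r hx0 hx1
    _ = Fintype.card α * (x + Fintype.card α - 1) ^ Fintype.card ι := by
        rw [sum_const, card_univ, nsmul_eq_mul]

theorem card_exists_fiber_le_le_mul_pow [Nonempty α] {r : ℕ} {t δ : ℝ} (ht : 0 ≤ t) (hδ : 0 < δ)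
    (h : t * r + (Fintype.card ι / Fintype.card α) * (exp (-t) - 1) ≤
      -log (Fintype.card α / δ)) :
    (#{f : ι → α | ∃ c, #{i | f i = c} ≤ r} : ℝ) ≤ δ * Fintype.card α ^ Fintype.card ι := by
  set k : ℝ := (Fintype.card α : ℝ)
  set n := Fintype.card ι
  set x := exp (-t)
  have hk : 0 < k := Nat.cast_pos.2 Fintype.card_pos
  have hx0 : 0 < x := exp_pos _
  have hx1 : x ≤ 1 := exp_le_one_iff.2 (by linarith)
  have hxr : x ^ r = exp (-(t * r)) := by rw [← exp_nat_mul]; ring_nf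
  have hexp : k * exp (n * (x - 1) / k) ≤ δ * x ^ r := by
    rw [hxr, show k * exp (n * (x - 1) / k) = exp (log k + n * (x - 1) / k) by
      rw [exp_add, exp_log hk], show δ * exp (-(t * r)) = exp (log δ - t * r) by
      rw [sub_eq_add_neg, exp_add, exp_log hδ], exp_le_exp]
    rw [log_div hk.ne' hδ.ne'] at h
    linarith [show n * (x - 1) / k = n / k * (x - 1) by ring]
  have hbase : 0 ≤ x + k - 1 := by
    have : (1 : ℝ) ≤ k := Nat.one_le_cast.2 Fintype.card_pos
    linarith
  refine le_of_mul_le_mul_right ?_ (pow_pos hx0 r)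
  calc (#{f : ι → α | ∃ c, #{i | f i = c} ≤ r} : ℝ) * x ^ r
      ≤ k * (x + k - 1) ^ n := card_exists_fiber_le_mul_pow_le r hx0.le hx1
    _ ≤ k * (k ^ n * exp (n * (x - 1) / k)) := by
        gcongr; exact pow_add_sub_one_le_pow_mul_exp hk hbase n
    _ = k ^ n * (k * exp (n * (x - 1) / k)) := by ring
    _ ≤ k ^ n * (δ * x ^ r) := by gcongr
    _ = δ * k ^ n * x ^ r := by ring

theorem one_sub_le_card_forall_lt_fiber_div [Nonempty α] {r : ℕ} {t δ : ℝ} (ht : 0 ≤ t)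
    (hδ : 0 < δ) (h : t * r + (Fintype.card ι / Fintype.card α) * (exp (-t) - 1) ≤
      -log (Fintype.card α / δ)) :
    1 - δ ≤ (#{f : ι → α | ∀ c, r < #{i | f i = c}} : ℝ) / Fintype.card α ^ Fintype.card ι := by
  have hsplit := card_filter_add_card_filter_not (s := (univ : Finset (ι → α)))
    (fun f => ∀ c, r < #{i | f i = c})
  have hcompl : #{f : ι → α | ¬ ∀ c, r < #{i | f i = c}} =
      #{f : ι → α | ∃ c, #{i | f i = c} ≤ r} :=
    congrArg card <| filter_congr fun f _ => by simp only [not_forall, not_lt]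
  rw [hcompl, card_univ, Fintype.card_fun] at hsplit
  have hsplit' : (#{f : ι → α | ∀ c, r < #{i | f i = c}} : ℝ) +
      #{f : ι → α | ∃ c, #{i | f i = c} ≤ r} = (Fintype.card α : ℝ) ^ Fintype.card ι := by
    exact_mod_cast hsplit
  rw [le_div_iff₀ (pow_pos (Nat.cast_pos.2 Fintype.card_pos) _)]
  linarith [card_exists_fiber_le_le_mul_pow ht hδ h]

end Fibers

/-- Coupon-collector with multiplicities (Double Dixie Cup): after
`N = ⌈k·(Z−1 + ln(k/δ) + √((Z−1 + ln(k/δ))² − (Z−1)²/4))⌉` i.i.d. uniform samples,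
with probability at least `1 − δ` every coupon is collected at least `Z` times. -/
theorem stmt_4 (k Z : ℕ) (hk : 0 < k) (hZ : 0 < Z) (δ : ℝ) (hδ : δ ∈ Set.Ioo (0 : ℝ) 1)
    (N : ℕ)
    (hN : N = ⌈(k : ℝ) * (((Z : ℝ) - 1) + Real.log (k / δ) +
        Real.sqrt ((((Z : ℝ) - 1) + Real.log (k / δ)) ^ 2 - ((Z : ℝ) - 1) ^ 2 / 4))⌉₊) :
    1 - δ ≤
      ((Finset.univ.filter (fun f : Fin N → Fin k =>
          ∀ c : Fin k, Z ≤ (Finset.univ.filter (fun t : Fin N => f t = c)).card)).card : ℝ)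
        / (k : ℝ) ^ N := by
  obtain ⟨hδ0, hδ1⟩ := hδ
  obtain ⟨r, rfl⟩ : ∃ r, Z = r + 1 := ⟨Z - 1, by omega⟩
  have : Nonempty (Fin k) := Fin.pos_iff_nonempty.1 hk
  have hk0 : (0 : ℝ) < k := Nat.cast_pos.2 hk
  have hL : 0 < log (k / δ) :=
    log_pos ((one_lt_div hδ0).2 (hδ1.trans_le (Nat.one_le_cast.2 hk)))
  push_cast at hN
  rw [add_sub_cancel_right] at hN
  have hm : r + log (k / δ) + √((r + log (k / δ)) ^ 2 - r ^ 2 / 4) ≤ N / k := by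
    rw [le_div_iff₀ hk0, mul_comm, hN]
    exact Nat.le_ceil _
  obtain ⟨t, ht0, ht⟩ := exists_exponent_le_of_add_sqrt_le (Nat.cast_nonneg r) hL.le hm
  convert one_sub_le_card_forall_lt_fiber_div (ι := Fin N) (α := Fin k) ht0 hδ0
    (by simpa only [Fintype.card_fin] using ht) using 4
  · ext f; simp only [mem_filter, Nat.lt_iff_add_one_le]
  all_goals exact (Fintype.card_fin _).symm
end

section
/- Let A_1, …, A_N be independent geometric random variables with A_i ~ Geo(p_i) (support {1,2,…}, Pr[A_i = t] = p_i(1−p_i)^{t−1}) where p_1 ≥ … ≥ p_N. Then for A = Σ A_i and any λ ≥ 1, Pr[A > λ·E[A]] ≤ exp(−p_N·E[A]·(λ − 1 − ln λ)). -/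
open MeasureTheory ProbabilityTheory

open scoped ENNReal

/-! Chernoff's method with the single exponent `s = p_N (1 - 1/λ)`, which lies below every `p_i`.
The moment generating function of `Geo(p)` at `s` is `p e^s / (1 - (1 - p) e^s) ≤ (1 - s/p)⁻¹`,
because `(1 - s) e^s ≤ 1`; by Bernoulli's inequality with exponent `p_N / p_i ≤ 1` this is at most
`λ ^ (p_N / p_i)`. By independence the MGF of `A` at `s` is at most `λ ^ (p_N E[A])`, and Markov's
inequality for `e^{sA}` at level `e^{sλE[A]}` gives `exp (p_N E[A] log λ - p_N (λ - 1) E[A])`. -/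

section Geometric

variable {Ω : Type*} [MeasurableSpace Ω] {μ : Measure Ω} {X : Ω → ℕ} {p : ℝ}

lemma lintegral_comp_nat_eq_tsum (hX : Measurable X) (f : ℕ → ℝ≥0∞) :
    ∫⁻ ω, f (X ω) ∂μ = ∑' n, f n * μ {ω | X ω = n} := by
  rw [← lintegral_map measurable_from_top hX, lintegral_countable']
  congr! with n
  exact Measure.map_apply hX (measurableSet_singleton n)

lemma tsum_exp_mul_succ_of_geometric (hp0 : 0 ≤ p) (hp1 : p ≤ 1)
    (hgeo : ∀ t : ℕ, 1 ≤ t → μ {ω | X ω = t} = ENNReal.ofReal (p * (1 - p) ^ (t - 1)))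
    {s : ℝ} (hs : (1 - p) * Real.exp s < 1) :
    ∑' n : ℕ, ENNReal.ofReal (Real.exp (s * (n + 1 : ℕ))) * μ {ω | X ω = n + 1} =
      ENNReal.ofReal (p * Real.exp s / (1 - (1 - p) * Real.exp s)) := by
  have hr : 0 ≤ (1 - p) * Real.exp s := by have := Real.exp_pos s; nlinarith
  have hterm : ∀ n : ℕ, ENNReal.ofReal (Real.exp (s * (n + 1 : ℕ))) * μ {ω | X ω = n + 1} =
      ENNReal.ofReal (p * Real.exp s * ((1 - p) * Real.exp s) ^ n) := by
    intro n
    rw [hgeo (n + 1) n.succ_pos, ← ENNReal.ofReal_mul (Real.exp_nonneg _), Nat.add_sub_cancel,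
      Nat.cast_succ, mul_add_one, Real.exp_add, mul_comm s, Real.exp_nat_mul, mul_pow]
    ring_nf
  simp_rw [hterm]
  rw [← ENNReal.ofReal_tsum_of_nonneg (fun n => by positivity)
    ((summable_geometric_of_lt_one hr hs).mul_left _), tsum_mul_left,
    tsum_geometric_of_lt_one hr hs, div_eq_mul_inv]

lemma lintegral_exp_mul_eq_add_tsum (hX : Measurable X) (s : ℝ) :
    ∫⁻ ω, ENNReal.ofReal (Real.exp (s * X ω)) ∂μ = μ {ω | X ω = 0} +
      ∑' n : ℕ, ENNReal.ofReal (Real.exp (s * (n + 1 : ℕ))) * μ {ω | X ω = n + 1} := by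
  rw [lintegral_comp_nat_eq_tsum (f := fun n : ℕ => ENNReal.ofReal (Real.exp (s * n))) hX,
    tsum_eq_zero_add' ENNReal.summable]
  simp

/-- The point masses at `1, 2, …` already sum to one. -/
lemma measure_eq_zero_of_geometric [IsProbabilityMeasure μ] (hX : Measurable X) (hp0 : 0 < p)
    (hp1 : p ≤ 1)
    (hgeo : ∀ t : ℕ, 1 ≤ t → μ {ω | X ω = t} = ENNReal.ofReal (p * (1 - p) ^ (t - 1))) :
    μ {ω | X ω = 0} = 0 := by
  have h := lintegral_exp_mul_eq_add_tsum (μ := μ) hX 0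
  rw [tsum_exp_mul_succ_of_geometric hp0.le hp1 hgeo (by simpa using hp0)] at h
  simp only [zero_mul, Real.exp_zero, mul_one, sub_sub_cancel, div_self hp0.ne',
    ENNReal.ofReal_one, lintegral_const, measure_univ] at h
  exact (ENNReal.add_left_inj ENNReal.one_ne_top).1 (by rw [zero_add, ← h])

lemma lintegral_exp_mul_of_geometric [IsProbabilityMeasure μ] (hX : Measurable X) (hp0 : 0 < p)
    (hp1 : p ≤ 1)
    (hgeo : ∀ t : ℕ, 1 ≤ t → μ {ω | X ω = t} = ENNReal.ofReal (p * (1 - p) ^ (t - 1)))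
    {s : ℝ} (hs : (1 - p) * Real.exp s < 1) :
    ∫⁻ ω, ENNReal.ofReal (Real.exp (s * X ω)) ∂μ =
      ENNReal.ofReal (p * Real.exp s / (1 - (1 - p) * Real.exp s)) := by
  rw [lintegral_exp_mul_eq_add_tsum hX, measure_eq_zero_of_geometric hX hp0 hp1 hgeo, zero_add,
    tsum_exp_mul_succ_of_geometric hp0.le hp1 hgeo hs]

end Geometric

lemma Real.one_sub_mul_exp_le_one (s : ℝ) : (1 - s) * Real.exp s ≤ 1 := by
  calc (1 - s) * Real.exp s ≤ Real.exp (-s) * Real.exp s := by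
        gcongr; exact Real.one_sub_le_exp_neg s
    _ = 1 := by rw [← Real.exp_add, neg_add_cancel, Real.exp_zero]

lemma one_sub_mul_exp_lt_one {p s : ℝ} (hsp : s < p) : (1 - p) * Real.exp s < 1 := by
  calc (1 - p) * Real.exp s < (1 - s) * Real.exp s := by gcongr
    _ ≤ 1 := Real.one_sub_mul_exp_le_one s

lemma geometric_mgf_le_inv_one_sub_div {p s : ℝ} (hp : 0 < p) (hsp : s < p) :
    p * Real.exp s / (1 - (1 - p) * Real.exp s) ≤ (1 - s / p)⁻¹ := by
  have hden : 0 < 1 - (1 - p) * Real.exp s := sub_pos.2 (one_sub_mul_exp_lt_one hsp)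
  rw [div_le_iff₀ hden, inv_mul_eq_div, le_div_iff₀ (by rw [sub_pos, div_lt_one hp]; exact hsp)]
  field_simp
  nlinarith [Real.one_sub_mul_exp_le_one s]

lemma inv_one_sub_div_le_rpow {p q lam : ℝ} (hq : 0 < q) (hqp : q ≤ p) (hlam : 1 ≤ lam) :
    (1 - q * (1 - lam⁻¹) / p)⁻¹ ≤ lam ^ (q / p) := by
  have hp : 0 < p := hq.trans_le hqp
  have hbernoulli := rpow_one_add_le_one_add_mul_self (s := lam⁻¹ - 1) (p := q / p)
    (by linarith [inv_nonneg.2 (zero_le_one.trans hlam)]) (by positivity) ((div_le_one hp).2 hqp)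
  rw [add_sub_cancel, Real.inv_rpow (by linarith)] at hbernoulli
  have : 1 + q / p * (lam⁻¹ - 1) = 1 - q * (1 - lam⁻¹) / p := by ring
  rw [this] at hbernoulli
  simpa using inv_anti₀ (by positivity) hbernoulli

section Chernoff

variable {Ω : Type*} [MeasurableSpace Ω] {μ : Measure Ω}

lemma measure_lt_le_lintegral_exp_mul_div {f : Ω → ℝ} (hf : Measurable f) {s : ℝ} (hs : 0 ≤ s)
    (a : ℝ) :
    μ {ω | a < f ω} ≤
      (∫⁻ ω, ENNReal.ofReal (Real.exp (s * f ω)) ∂μ) / ENNReal.ofReal (Real.exp (s * a)) := by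
  refine (measure_mono fun ω (hω : a < f ω) => ?_).trans
    (meas_ge_le_lintegral_div (hf.const_mul s).exp.ennreal_ofReal.aemeasurable
      (ENNReal.ofReal_pos.2 (Real.exp_pos _)).ne' ENNReal.ofReal_ne_top)
  exact ENNReal.ofReal_le_ofReal (Real.exp_le_exp.2 (mul_le_mul_of_nonneg_left hω.le hs))

lemma lintegral_exp_mul_sum_of_iIndepFun {ι : Type*} (S : Finset ι) {X : ι → Ω → ℝ}
    (hX : ∀ i, Measurable (X i)) (hind : iIndepFun X μ) (s : ℝ) :
    ∫⁻ ω, ENNReal.ofReal (Real.exp (s * ∑ i ∈ S, X i ω)) ∂μ =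
      ∏ i ∈ S, ∫⁻ ω, ENNReal.ofReal (Real.exp (s * X i ω)) ∂μ := by
  have hexp (i : ι) : Measurable fun x : ℝ => ENNReal.ofReal (Real.exp (s * x)) := by fun_prop
  calc _ = ∫⁻ ω, ∏ i ∈ S, ENNReal.ofReal (Real.exp (s * X i ω)) ∂μ := by
        simp_rw [Finset.mul_sum, Real.exp_sum,
          ENNReal.ofReal_prod_of_nonneg fun i _ => (Real.exp_pos _).le]
    _ = _ := lintegral_prod_eq_prod_lintegral_of_indepFun S _ (hind.comp _ hexp)
        fun i => (hexp i).comp (hX i)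

end Chernoff

/-- Janson's tail bound for sums of independent geometric random variables:
if `A i ~ Geo(p i)` (support `{1,2,…}`) are independent with `p 0 ≥ p 1 ≥ … ≥ p (N−1)`,
then for `A = Σ A i` and any `λ ≥ 1`,
`Pr[A > λ E[A]] ≤ exp(−p_N · E[A] · (λ − 1 − ln λ))` where `E[A] = Σ 1/p i`. -/
theorem stmt_7 {Ω : Type*} [MeasurableSpace Ω] (μ : Measure Ω) [IsProbabilityMeasure μ]
    (N : ℕ) (hN : 0 < N) (p : Fin N → ℝ)
    (hp : ∀ i, 0 < p i ∧ p i ≤ 1)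
    (hmono : ∀ i j : Fin N, i ≤ j → p j ≤ p i)
    (A : Fin N → Ω → ℕ) (hmeas : ∀ i, Measurable (A i))
    (hindep : iIndepFun A μ)
    (hgeo : ∀ i, ∀ t : ℕ, 1 ≤ t →
      μ {ω | A i ω = t} = ENNReal.ofReal (p i * (1 - p i) ^ (t - 1)))
    (E : ℝ) (hE : E = ∑ i, 1 / p i)
    (lam : ℝ) (hlam : 1 ≤ lam) :
    μ {ω | lam * E < ∑ i, (A i ω : ℝ)} ≤
      ENNReal.ofReal (Real.exp (-(p ⟨N - 1, by omega⟩ * E * (lam - 1 - Real.log lam)))) := by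
  set q := p ⟨N - 1, by omega⟩
  have hq_le (i : Fin N) : q ≤ p i := hmono _ _ (Fin.le_def.2 (by simp; omega))
  have hlam0 : 0 < lam := one_pos.trans_le hlam
  set s := q * (1 - lam⁻¹)
  have hs0 : 0 ≤ s := mul_nonneg (hp _).1.le (sub_nonneg.2 (inv_le_one_of_one_le₀ hlam))
  have hmgf (i : Fin N) :
      ∫⁻ ω, ENNReal.ofReal (Real.exp (s * A i ω)) ∂μ ≤ ENNReal.ofReal (lam ^ (q / p i)) := by
    have hsp : s < p i := by
      refine lt_of_lt_of_le ?_ (hq_le i)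
      nlinarith [inv_pos.2 hlam0, (hp ⟨N - 1, by omega⟩).1]
    rw [lintegral_exp_mul_of_geometric (hmeas i) (hp i).1 (hp i).2 (hgeo i)
      (one_sub_mul_exp_lt_one hsp)]
    exact ENNReal.ofReal_le_ofReal ((geometric_mgf_le_inv_one_sub_div (hp i).1 hsp).trans
      (inv_one_sub_div_le_rpow (hp _).1 (hq_le i) hlam))
  have hsum : ∑ i, q / p i = q * E := by rw [hE, Finset.mul_sum]; simp_rw [mul_one_div]
  have hindep' : iIndepFun (fun i ω => (A i ω : ℝ)) μ :=
    hindep.comp (fun _ n => (n : ℝ)) fun _ => measurable_from_top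
  calc μ {ω | lam * E < ∑ i, (A i ω : ℝ)}
      ≤ (∫⁻ ω, ENNReal.ofReal (Real.exp (s * ∑ i, (A i ω : ℝ))) ∂μ) /
          ENNReal.ofReal (Real.exp (s * (lam * E))) :=
        measure_lt_le_lintegral_exp_mul_div (by fun_prop) hs0 _
    _ = (∏ i, ∫⁻ ω, ENNReal.ofReal (Real.exp (s * A i ω)) ∂μ) /
          ENNReal.ofReal (Real.exp (s * (lam * E))) := by
        rw [lintegral_exp_mul_sum_of_iIndepFun _ (fun i => by fun_prop) hindep']
    _ ≤ (∏ i, ENNReal.ofReal (lam ^ (q / p i))) / ENNReal.ofReal (Real.exp (s * (lam * E))) := by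
        gcongr with i
        exact hmgf i
    _ = ENNReal.ofReal (Real.exp (-(q * E * (lam - 1 - Real.log lam)))) := by
        rw [← ENNReal.ofReal_prod_of_nonneg fun i _ => by positivity,
          ← Real.rpow_sum_of_pos hlam0, hsum, ← ENNReal.ofReal_div_of_pos (Real.exp_pos _),
          Real.rpow_def_of_pos hlam0, ← Real.exp_sub]
        congr 2
        simp only [s]
        field_simp
        ring
end

section
/- Fix r coupons, target N < r distinct coupons, δ ∈ (0,1), and let E = r(H_r − H_{r−N}). With probability at least 1−δ, the number of uniform samples required to see at least N distinct coupons is at most E + r·ln(1/δ)/(r−N) + √(2r·E·ln(1/δ)/(r−N)). -/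
open MeasureTheory ProbabilityTheory Real
open scoped ENNReal

/-!
The collection time is a sum of independent geometric variables with success probabilities
`p_i = 1 - i / r ≥ p_min = (r - N) / r` and total mean `E = r (H_r - H_{r-N})`. In Chernoff's
bound, each geometric mgf `p e^t / (1 - (1 - p) e^t)` is at most `p / (p - t)` because
`e^t (1 - t) ≤ 1`, and Bernoulli's inequality turns the product of these factors into Janson's
bound `exp (-p_min E (λ - 1 - log λ))`. Choosing `λ = 1 + u + √(2u)` with
`u = log (1/δ) / (p_min E)` makes the exponent at most `-log (1/δ)`, since
`log (1 + v + v² / 2) ≤ v`.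
-/

/-- `harmonicR m` is the m-th harmonic number `H_m = ∑_{j=1}^m 1/j`. -/
noncomputable def harmonicR (m : ℕ) : ℝ := ∑ j ∈ Finset.range m, (1 : ℝ) / (j + 1)

/-- Geometric law on `{1, 2, …}` with failure probability `q`. -/
def HasGeomLaw {Ω : Type*} [MeasurableSpace Ω] (μ : Measure Ω) (X : Ω → ℕ) (q : ℝ) : Prop :=
  ∀ t : ℕ, 1 ≤ t → μ {ω | X ω = t} = ENNReal.ofReal ((1 - q) * q ^ (t - 1))

noncomputable def geomMgf (q t : ℝ) : ℝ := (1 - q) * exp t / (1 - q * exp t)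

lemma geomMgf_nonneg {q t : ℝ} (hq : q ≤ 1) (hqt : q * exp t < 1) : 0 ≤ geomMgf q t :=
  div_nonneg (mul_nonneg (by linarith) (exp_pos t).le) (by linarith)

section Geometric

variable {Ω : Type*} [MeasurableSpace Ω] {μ : Measure Ω} {X : Ω → ℕ}

lemma lintegral_comp_eq_tsum (hX : Measurable X) (f : ℕ → ℝ≥0∞) :
    ∫⁻ ω, f (X ω) ∂μ = ∑' k, f k * μ {ω | X ω = k} := by
  rw [← lintegral_map measurable_from_top hX, lintegral_countable']
  refine tsum_congr fun k => ?_
  rw [Measure.map_apply hX (measurableSet_singleton k)]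
  rfl

namespace HasGeomLaw

variable [IsProbabilityMeasure μ] {q : ℝ}

lemma measure_eq_zero (h : HasGeomLaw μ X q) (hX : Measurable X) (hq0 : 0 ≤ q) (hq1 : q < 1) :
    μ {ω | X ω = 0} = 0 := by
  have htotal : ∑' k, μ {ω | X ω = k} = 1 := by
    simpa using (lintegral_comp_eq_tsum (μ := μ) hX fun _ => 1).symm
  have hpos : ∑' k, μ {ω | X ω = k + 1} = 1 := by
    simp_rw [h _ (Nat.le_add_left 1 _), Nat.add_sub_cancel]
    rw [← ENNReal.ofReal_tsum_of_nonneg (fun k => by have := pow_nonneg hq0 k; nlinarith)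
      ((summable_geometric_of_lt_one hq0 hq1).mul_left _), tsum_mul_left,
      tsum_geometric_of_lt_one hq0 hq1, mul_inv_cancel₀ (by linarith), ENNReal.ofReal_one]
  rw [tsum_eq_zero_add' ENNReal.summable, hpos] at htotal
  simpa using htotal

lemma lintegral_exp_mul (h : HasGeomLaw μ X q) (hX : Measurable X) (hq0 : 0 ≤ q) (hq1 : q < 1)
    {t : ℝ} (hqt : q * exp t < 1) :
    ∫⁻ ω, ENNReal.ofReal (exp (t * X ω)) ∂μ = ENNReal.ofReal (geomMgf q t) := by
  have hterm : ∀ k : ℕ, exp (t * (k + 1 : ℕ)) * ((1 - q) * q ^ k)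
      = (1 - q) * exp t * (q * exp t) ^ k := fun k => by
    rw [Nat.cast_succ, mul_add_one, exp_add, mul_pow, ← exp_nat_mul, mul_comm (k : ℝ)]
    ring
  rw [lintegral_comp_eq_tsum hX fun k : ℕ => ENNReal.ofReal (exp (t * k)),
    tsum_eq_zero_add' ENNReal.summable, h.measure_eq_zero hX hq0 hq1, mul_zero, zero_add]
  simp_rw [h _ (Nat.le_add_left 1 _), Nat.add_sub_cancel,
    ← ENNReal.ofReal_mul (exp_nonneg _), hterm]
  rw [← ENNReal.ofReal_tsum_of_nonneg (fun k => by positivity)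
      ((summable_geometric_of_lt_one (by positivity) hqt).mul_left _),
    tsum_mul_left, tsum_geometric_of_lt_one (by positivity) hqt, geomMgf, div_eq_mul_inv]

lemma integrable_exp_mul (h : HasGeomLaw μ X q) (hX : Measurable X) (hq0 : 0 ≤ q) (hq1 : q < 1)
    {t : ℝ} (hqt : q * exp t < 1) : Integrable (fun ω => exp (t * X ω)) μ := by
  refine ⟨by fun_prop, ?_⟩
  rw [hasFiniteIntegral_iff_ofReal (.of_forall fun ω => exp_nonneg _),
    h.lintegral_exp_mul hX hq0 hq1 hqt]
  exact ENNReal.ofReal_lt_top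

lemma mgf_eq (h : HasGeomLaw μ X q) (hX : Measurable X) (hq0 : 0 ≤ q) (hq1 : q < 1)
    {t : ℝ} (hqt : q * exp t < 1) : mgf (fun ω => (X ω : ℝ)) μ t = geomMgf q t := by
  rw [mgf, integral_eq_lintegral_of_nonneg_ae (.of_forall fun ω => exp_nonneg _) (by fun_prop),
    h.lintegral_exp_mul hX hq0 hq1 hqt, ENNReal.toReal_ofReal (geomMgf_nonneg hq1.le hqt)]

end HasGeomLaw

end Geometric

lemma exp_mul_one_sub_le_one (t : ℝ) : exp t * (1 - t) ≤ 1 :=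
  calc exp t * (1 - t) ≤ exp t * exp (-t) := by gcongr; exact one_sub_le_exp_neg t
  _ = 1 := by rw [← exp_add, add_neg_cancel, exp_zero]

lemma mul_exp_lt_one {q t : ℝ} (ht : t < 1 - q) : q * exp t < 1 :=
  calc q * exp t < (1 - t) * exp t := by gcongr; linarith
  _ ≤ 1 := by linarith [exp_mul_one_sub_le_one t]

lemma geomMgf_le_div {q t : ℝ} (ht0 : 0 ≤ t) (ht : t < 1 - q) :
    geomMgf q t ≤ (1 - q) / (1 - q - t) := by
  have hqt := mul_exp_lt_one ht
  rw [geomMgf, div_le_div_iff₀ (by linarith) (by linarith)]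
  nlinarith [exp_mul_one_sub_le_one t]

lemma div_sub_mul_le_exp_neg_mul_log {p P y : ℝ} (hP : 0 < P) (hPp : P ≤ p) (hy0 : 0 ≤ y)
    (hy1 : y < 1) : p / (p - P * y) ≤ exp (-(P / p) * log (1 - y)) := by
  have hp : 0 < p := hP.trans_le hPp
  have hα1 : P / p ≤ 1 := (div_le_one hp).2 hPp
  have hbern : exp (P / p * log (1 - y)) ≤ 1 - P / p * y := by
    have := rpow_one_add_le_one_add_mul_self (s := -y) (by linarith) (by positivity) hα1
    rwa [mul_neg, ← sub_eq_add_neg, ← sub_eq_add_neg, rpow_def_of_pos (by linarith),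
      mul_comm] at this
  have hpos : 0 < 1 - P / p * y := by nlinarith
  calc p / (p - P * y) = (1 - P / p * y)⁻¹ := by field_simp
  _ ≤ (exp (P / p * log (1 - y)))⁻¹ := by gcongr
  _ = exp (-(P / p) * log (1 - y)) := by rw [← exp_neg, neg_mul]

lemma geomMgf_le_exp {q P y : ℝ} (hP : 0 < P) (hPq : P ≤ 1 - q) (hy0 : 0 ≤ y)
    (hy1 : y < 1) : geomMgf q (P * y) ≤ exp (-(P / (1 - q)) * log (1 - y)) :=
  (geomMgf_le_div (by positivity) (by nlinarith)).trans
    (div_sub_mul_le_exp_neg_mul_log hP hPq hy0 hy1)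

lemma prod_geomMgf_le_exp {ι : Type*} [Fintype ι] {q : ι → ℝ} {pmin y : ℝ} (hpmin : 0 < pmin)
    (hpmin_le : ∀ i, pmin ≤ 1 - q i) (hy0 : 0 ≤ y) (hy1 : y < 1) :
    ∏ i, geomMgf (q i) (pmin * y) ≤ exp (-(pmin * ∑ i, 1 / (1 - q i)) * log (1 - y)) :=
  calc ∏ i, geomMgf (q i) (pmin * y)
      ≤ ∏ i, exp (-(pmin / (1 - q i)) * log (1 - y)) :=
        Finset.prod_le_prod (fun i _ => geomMgf_nonneg (by linarith [hpmin_le i])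
            (mul_exp_lt_one (by nlinarith [hpmin_le i])))
          fun i _ => geomMgf_le_exp hpmin (hpmin_le i) hy0 hy1
  _ = exp (-(pmin * ∑ i, 1 / (1 - q i)) * log (1 - y)) := by
        rw [← exp_sum, ← Finset.sum_mul, Finset.sum_neg_distrib, Finset.mul_sum]
        simp_rw [mul_one_div]

/-- Janson's tail bound for a sum of independent geometric variables. -/
theorem measureReal_sum_ge_le_of_hasGeomLaw {Ω ι : Type*} [MeasurableSpace Ω] {μ : Measure Ω}
    [IsProbabilityMeasure μ] [Fintype ι] {A : ι → Ω → ℕ} {q : ι → ℝ} {pmin a : ℝ}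
    (hmeas : ∀ i, Measurable (A i)) (hindep : iIndepFun A μ)
    (hgeo : ∀ i, HasGeomLaw μ (A i) (q i)) (hq : ∀ i, 0 ≤ q i) (hpmin : 0 < pmin)
    (hpmin_le : ∀ i, pmin ≤ 1 - q i) (ha : 1 ≤ a) :
    μ.real {ω | a * ∑ i, 1 / (1 - q i) ≤ ∑ i, (A i ω : ℝ)} ≤
      exp (-(pmin * ∑ i, 1 / (1 - q i)) * (a - 1 - log a)) := by
  set E := ∑ i, 1 / (1 - q i)
  set y := 1 - 1 / a with hy
  have hy0 : 0 ≤ y := sub_nonneg.2 (div_le_one_of_le₀ ha (by linarith))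
  have hy1 : y < 1 := sub_lt_self 1 (by positivity)
  have hq1 : ∀ i, q i < 1 := fun i => by linarith [hpmin_le i]
  have hqt : ∀ i, q i * exp (pmin * y) < 1 := fun i => mul_exp_lt_one (by nlinarith [hpmin_le i])
  set X : ι → Ω → ℝ := fun i ω => A i ω
  have hXmeas : ∀ i, Measurable (X i) := fun i => by fun_prop
  have hXindep : iIndepFun X μ := hindep.comp _ fun _ => measurable_from_top
  have hchernoff := measure_ge_le_exp_mul_mgf (X := ∑ i, X i) (a * E) (by positivity)
    (hXindep.integrable_exp_mul_sum hXmeas (s := Finset.univ) fun i _ =>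
      (hgeo i).integrable_exp_mul (hmeas i) (hq i) (hq1 i) (hqt i))
  rw [hXindep.mgf_sum hXmeas] at hchernoff
  simp_rw [X, fun i => (hgeo i).mgf_eq (hmeas i) (hq i) (hq1 i) (hqt i)] at hchernoff
  have hexponent : -(pmin * y) * (a * E) + -(pmin * E) * log (1 - y) =
      -(pmin * E) * (a - 1 - log a) := by
    have ha0 : a ≠ 0 := by positivity
    rw [show 1 - y = a⁻¹ by ring, log_inv, hy]
    field_simp
    ring
  calc μ.real {ω | a * E ≤ ∑ i, (A i ω : ℝ)} = μ.real {ω | a * E ≤ (∑ i, X i) ω} := by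
        simp only [Finset.sum_apply, X]
  _ ≤ exp (-(pmin * y) * (a * E)) * exp (-(pmin * E) * log (1 - y)) := by
        refine hchernoff.trans ?_
        gcongr
        exact prod_geomMgf_le_exp hpmin hpmin_le hy0 hy1
  _ = exp (-(pmin * E) * (a - 1 - log a)) := by rw [← exp_add, hexponent]

lemma sum_inv_one_sub_div_eq_harmonicR {r N : ℕ} (hNr : N ≤ r) :
    ∑ i : Fin N, 1 / (1 - (i : ℝ) / r) = r * (harmonicR r - harmonicR (r - N)) := by
  induction N with
  | zero => simp
  | succ N ih =>
    have hN : (N : ℝ) < r := by exact_mod_cast hNr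
    have hstep : harmonicR (r - N) = harmonicR (r - (N + 1)) + 1 / ((r : ℝ) - N) := by
      rw [show r - N = r - (N + 1) + 1 by omega, harmonicR, Finset.sum_range_succ, ← harmonicR]
      push_cast [Nat.cast_sub hNr]
      ring_nf
    rw [Fin.sum_univ_castSucc]
    simp only [Fin.val_castSucc, Fin.val_last]
    rw [ih (by omega), hstep]
    have hr : (r : ℝ) ≠ 0 := by linarith
    field_simp
    ring

lemma log_one_add_add_sqrt_two_mul_le {u : ℝ} (hu : 0 ≤ u) :
    log (1 + u + √(2 * u)) ≤ √(2 * u) := by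
  have hsq : √(2 * u) ^ 2 / 2 = u := by rw [sq_sqrt (by linarith)]; ring
  rw [log_le_iff_le_exp (by positivity)]
  have := quadratic_le_exp_of_nonneg (sqrt_nonneg (2 * u))
  rwa [hsq, add_right_comm] at this

lemma ofReal_one_sub_le_measure_le {Ω : Type*} [MeasurableSpace Ω] {μ : Measure Ω}
    [IsProbabilityMeasure μ] {f : Ω → ℝ} {B δ : ℝ} (h : μ.real {ω | B ≤ f ω} ≤ δ) :
    ENNReal.ofReal (1 - δ) ≤ μ {ω | f ω ≤ B} := by
  have hδ : 0 ≤ δ := measureReal_nonneg.trans h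
  have hcompl : μ {ω | f ω ≤ B}ᶜ ≤ ENNReal.ofReal δ := by
    calc μ {ω | f ω ≤ B}ᶜ ≤ μ {ω | B ≤ f ω} :=
          measure_mono fun ω (hω : ¬f ω ≤ B) => le_of_not_ge hω
    _ = ENNReal.ofReal (μ.real {ω | B ≤ f ω}) := (ofReal_measureReal).symm
    _ ≤ ENNReal.ofReal δ := ENNReal.ofReal_le_ofReal h
  rw [ENNReal.ofReal_sub _ hδ, ENNReal.ofReal_one, tsub_le_iff_right]
  calc 1 = μ Set.univ := measure_univ.symm
  _ ≤ μ {ω | f ω ≤ B} + μ {ω | f ω ≤ B}ᶜ := measure_univ_le_add_compl _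
  _ ≤ μ {ω | f ω ≤ B} + ENNReal.ofReal δ := by gcongr

theorem measureReal_sum_ge_le_exp_neg_of_hasGeomLaw {Ω ι : Type*} [MeasurableSpace Ω]
    {μ : Measure Ω} [IsProbabilityMeasure μ] [Fintype ι] [Nonempty ι] {A : ι → Ω → ℕ}
    {q : ι → ℝ} {pmin T : ℝ} (hmeas : ∀ i, Measurable (A i)) (hindep : iIndepFun A μ)
    (hgeo : ∀ i, HasGeomLaw μ (A i) (q i)) (hq : ∀ i, 0 ≤ q i) (hpmin : 0 < pmin)
    (hpmin_le : ∀ i, pmin ≤ 1 - q i) (hT : 0 ≤ T) :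
    μ.real {ω | ∑ i, 1 / (1 - q i) + T / pmin + √(2 * (∑ i, 1 / (1 - q i)) * T / pmin) ≤
      ∑ i, (A i ω : ℝ)} ≤ exp (-T) := by
  set E := ∑ i, 1 / (1 - q i)
  have hE0 : 0 < E :=
    Finset.sum_pos (fun i _ => one_div_pos.2 (hpmin.trans_le (hpmin_le i))) Finset.univ_nonempty
  set u := T / (pmin * E) with hu_def
  have hu : 0 ≤ u := by positivity
  have hc : T / pmin = u * E := by rw [hu_def]; field_simp
  have hthreshold : E + T / pmin + √(2 * E * T / pmin) = (1 + u + √(2 * u)) * E := by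
    rw [mul_div_assoc, hc, show 2 * E * (u * E) = 2 * u * E ^ 2 by ring,
      sqrt_mul (by positivity), sqrt_sq hE0.le]
    ring
  rw [hthreshold]
  calc _ ≤ exp (-(pmin * E) * ((1 + u + √(2 * u)) - 1 - log (1 + u + √(2 * u)))) :=
        measureReal_sum_ge_le_of_hasGeomLaw hmeas hindep hgeo hq hpmin hpmin_le
          (by linarith [sqrt_nonneg (2 * u)])
  _ ≤ exp (-(pmin * E) * u) := by
        refine exp_le_exp.2 (mul_le_mul_of_nonpos_left ?_ (by nlinarith))
        linarith [log_one_add_add_sqrt_two_mul_le hu]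
  _ = exp (-T) := by rw [neg_mul, hu_def, mul_div_cancel₀ T (by positivity)]

/-- Partial coupon collector tail bound: the time to see `N` distinct coupons out of `r`
is a sum of independent geometrics `A i ~ Geo(1 − i/r)` (`i = 0,…,N−1`); with probability
at least `1 − δ` it is at most `E + r ln(1/δ)/(r−N) + √(2 r E ln(1/δ)/(r−N))`,
where `E = r(H_r − H_{r−N})`. -/
theorem stmt_9 {Ω : Type*} [MeasurableSpace Ω] (μ : Measure Ω) [IsProbabilityMeasure μ]
    (r N : ℕ) (hN : 0 < N) (hNr : N < r) (δ : ℝ) (hδ : δ ∈ Set.Ioo (0 : ℝ) 1)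
    (A : Fin N → Ω → ℕ) (hmeas : ∀ i, Measurable (A i))
    (hindep : iIndepFun A μ)
    (hgeo : ∀ i : Fin N, ∀ t : ℕ, 1 ≤ t →
      μ {ω | A i ω = t} = ENNReal.ofReal ((1 - (i : ℝ) / r) * ((i : ℝ) / r) ^ (t - 1)))
    (E : ℝ) (hE : E = (r : ℝ) * (harmonicR r - harmonicR (r - N))) :
    ENNReal.ofReal (1 - δ) ≤
      μ {ω | ∑ i, (A i ω : ℝ) ≤
        E + (r : ℝ) * Real.log (1 / δ) / ((r : ℝ) - N) +
          Real.sqrt (2 * r * E * Real.log (1 / δ) / ((r : ℝ) - N))} := by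
  obtain ⟨hδ0, hδ1⟩ := hδ
  have hNr' : (N : ℝ) < r := by exact_mod_cast hNr
  have hr : (0 : ℝ) < r := (Nat.cast_nonneg N).trans_lt hNr'
  have hpmin_le : ∀ i : Fin N, ((r : ℝ) - N) / r ≤ 1 - (i : ℝ) / r := fun i => by
    have hi : (i : ℝ) < N := by exact_mod_cast i.isLt
    rw [one_sub_div hr.ne']
    exact div_le_div_of_nonneg_right (by linarith) hr.le
  have hEsum : ∑ i : Fin N, 1 / (1 - (i : ℝ) / r) = E := by
    rw [hE, sum_inv_one_sub_div_eq_harmonicR hNr.le]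
  have : Nonempty (Fin N) := ⟨⟨0, hN⟩⟩
  have htail := measureReal_sum_ge_le_exp_neg_of_hasGeomLaw (q := fun i : Fin N => (i : ℝ) / r)
    hmeas hindep hgeo (fun i => by positivity) (div_pos (by linarith) hr) hpmin_le
    (log_nonneg (by rw [le_div_iff₀ hδ0]; linarith) : 0 ≤ log (1 / δ))
  rw [hEsum] at htail
  refine ofReal_one_sub_le_measure_le ?_
  calc _ ≤ exp (-log (1 / δ)) := by
        convert htail using 5
        simp only [div_div_eq_mul_div]
        ring_nf
  _ = δ := by rw [one_div, log_inv, neg_neg, exp_log hδ0]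
end

section
/- Let K be a positive integer and ψ ∈ (0,1/2] with ψK an integer. In the coupon-collector process over K coupons, with probability at least 1−δ, after K·ln(1/ψ) + ψ^{-1}·ln(1/δ) + √(2K·ψ^{-1}·ln(1/ψ)·ln(1/δ)) samples, all but at most ψK coupons have been collected. -/
/-!
Collecting `K - M` distinct coupons takes `T = A₀ + ⋯ + A_{K-M-1}` samples, where the waiting
times `Aᵢ ~ Geo((K - i)/K)` are independent. Conditioning on the first sample shows, by counting
sample sequences, the Chernoff bound `P(T > n) ≤ (1 - u)ⁿ ∏ᵢ E[(1 - u)^{-Aᵢ}]`, and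
`E[(1 - u)^{-Aᵢ}] = (K - i)/(K - i - uK)`. The estimate `(1 - y)⁻¹ ≤ exp (y + y²/(2(1 - y)))`
together with `∑ 1/(K - i) ≤ log (K/M)` and `∑ 1/(K - i)² ≤ 1/M - 1/K ≤ log (K/M)/M` shows
that `T` is sub-gamma with mean bound `K log (K/M)`, variance factor `V = K²/M · log (K/M)`
and scale `K/M`; Bernstein's choice of `u` then bounds the tail at
`n = K log (K/M) + (K/M) log (1/δ) + √(2 V log (1/δ))` by `δ`.
-/

open Finset Real

lemma Real.log_le_sub_inv_div_two {t : ℝ} (ht : 1 ≤ t) : log t ≤ (t - t⁻¹) / 2 := by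
  have ht0 : 0 < t := by linarith
  calc log t ≤ sinh (log t) := self_le_sinh_iff.2 (log_nonneg ht)
    _ = (t - t⁻¹) / 2 := by rw [sinh_eq, exp_neg, exp_log ht0]

lemma Real.inv_one_sub_le_exp {x : ℝ} (hx0 : 0 ≤ x) (hx1 : x < 1) :
    (1 - x)⁻¹ ≤ exp (x + x ^ 2 / (2 * (1 - x))) := by
  have hpos : 0 < 1 - x := by linarith
  have hlog := log_le_sub_inv_div_two (one_le_inv_iff₀.2 ⟨hpos, by linarith⟩)
  rw [inv_inv, show ((1 - x)⁻¹ - (1 - x)) / 2 = x + x ^ 2 / (2 * (1 - x)) by field_simp; ring]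
    at hlog
  calc (1 - x)⁻¹ = exp (log (1 - x)⁻¹) := (exp_log (inv_pos.2 hpos)).symm
    _ ≤ _ := exp_le_exp.2 hlog

lemma sum_range_inv_sub_le_log {x : ℝ} {r : ℕ} (hr : (r : ℝ) < x) :
    ∑ i ∈ range r, (x - i)⁻¹ ≤ log x - log (x - r) := by
  calc ∑ i ∈ range r, (x - i)⁻¹
      ≤ ∑ i ∈ range r, (log (x - i) - log (x - (i + 1 : ℕ))) := sum_le_sum fun i hi ↦ ?_
    _ = log x - log (x - r) := by rw [sum_range_sub']; simp
  have hi : (i : ℝ) + 1 ≤ r := by exact_mod_cast mem_range.1 hi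
  have h1 : 0 < x - (i + 1) := by linarith
  have h0 : 0 < x - i := by linarith
  have := one_sub_inv_le_log_of_pos (div_pos h0 h1)
  rw [log_div h0.ne' h1.ne', inv_div] at this
  push_cast
  exact le_of_eq_of_le (by field_simp; ring) this

lemma sum_range_inv_sub_sq_le {x : ℝ} {r : ℕ} (hr : (r : ℝ) < x) :
    ∑ i ∈ range r, (x - i)⁻¹ ^ 2 ≤ (x - r)⁻¹ - x⁻¹ := by
  calc ∑ i ∈ range r, (x - i)⁻¹ ^ 2
      ≤ ∑ i ∈ range r, ((x - (i + 1 : ℕ))⁻¹ - (x - i)⁻¹) := sum_le_sum fun i hi ↦ ?_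
    _ = (x - r)⁻¹ - x⁻¹ := by rw [sum_range_sub (fun i : ℕ ↦ (x - i)⁻¹)]; simp
  have hi : (i : ℝ) + 1 ≤ r := by exact_mod_cast mem_range.1 hi
  have h1 : 0 < x - (i + 1) := by linarith
  have h0 : 0 < x - i := by linarith
  push_cast
  rw [inv_sub_inv h1.ne' h0.ne', sq, ← mul_inv, show x - i - (x - (i + 1)) = 1 by ring, one_div]
  gcongr
  linarith

lemma inv_sub_inv_le_log_div_div {x m : ℝ} (hm : 0 < m) (hx : 0 < x) :
    m⁻¹ - x⁻¹ ≤ log (x / m) / m := by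
  have := one_sub_inv_le_log_of_pos (div_pos hx hm)
  rw [inv_div] at this
  calc m⁻¹ - x⁻¹ = (1 - m / x) / m := by field_simp
    _ ≤ log (x / m) / m := by gcongr

-- The optimal Chernoff parameter for a sub-gamma variable with variance factor `V`, scale `c`.
lemma exists_subGamma_exponent_le {A V c b n : ℝ} (hV : 0 < V) (hc : 0 < c) (hb : 0 ≤ b)
    (hn : A + c * b + √(2 * V * b) ≤ n) :
    ∃ u, 0 ≤ u ∧ u * c < 1 ∧ u * (A - n) + u ^ 2 * V / (2 * (1 - u * c)) ≤ -b := by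
  set s := √(2 * b / V)
  have hs0 : 0 ≤ s := sqrt_nonneg _
  have hVs : V * s ^ 2 = 2 * b := by
    rw [sq_sqrt (by positivity)]; field_simp
  have hsqrt : √(2 * V * b) = V * s := by
    rw [← sqrt_sq (by positivity : 0 ≤ V * s)]
    congr 1
    linear_combination (-V) * hVs
  have hcs : 0 < 1 + c * s := by positivity
  refine ⟨s / (1 + c * s), by positivity, ?_, ?_⟩
  · rw [div_mul_eq_mul_div, div_lt_one hcs]; linarith [mul_comm s c]
  · have h1 : 1 - s / (1 + c * s) * c = (1 + c * s)⁻¹ := by field_simp; ring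
    have h2 : s / (1 + c * s) * (A - n) ≤ -(s / (1 + c * s) * (c * b + V * s)) := by
      rw [← mul_neg]; gcongr; linarith
    rw [h1]
    refine (add_le_add_left h2 _).trans (le_of_eq ?_)
    field_simp
    linear_combination -hVs

/-- `E[(1 - t/K)^{-A}]` for the waiting time `A ~ Geo((K - i)/K)` of the `(i+1)`-st new coupon. -/
noncomputable def couponMgf (K t : ℝ) (i : ℕ) : ℝ := (K - i) / (K - i - t)

lemma one_le_couponMgf {K t : ℝ} {i : ℕ} (ht0 : 0 ≤ t) (ht : t < K - i) : 1 ≤ couponMgf K t i :=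
  (one_le_div (by linarith)).2 (by linarith)

lemma one_le_prod_couponMgf {K t : ℝ} {r : ℕ} (ht0 : 0 ≤ t) (ht : t < K - r) (d : ℕ) :
    1 ≤ ∏ i ∈ Ico d r, couponMgf K t i :=
  one_le_prod fun i hi ↦ one_le_couponMgf ht0 <| by
    have : (i : ℝ) < r := by exact_mod_cast (mem_Ico.1 hi).2
    linarith

lemma couponMgf_step {K t : ℝ} {d : ℕ} (ht : t < K - d) :
    d * couponMgf K t d + (K - d) = (K - t) * couponMgf K t d := by
  have : K - d - t ≠ 0 := by linarith
  unfold couponMgf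
  field_simp
  ring

lemma prod_couponMgf_le_exp {x t : ℝ} {r : ℕ} (ht0 : 0 ≤ t) (ht : t < x - r) :
    ∏ i ∈ range r, couponMgf x t i ≤
      exp (t * (log x - log (x - r)) +
        t ^ 2 * ((x - r)⁻¹ - x⁻¹) / (2 * (1 - t / (x - r)))) := by
  have hm : 0 < x - r := by linarith
  have hρ : t / (x - r) < 1 := (div_lt_one hm).2 ht
  have hdist : ∀ i ∈ range r, x - r ≤ x - i := fun i hi ↦ by
    have : (i : ℝ) ≤ r := by exact_mod_cast (mem_range.1 hi).le
    linarith
  have hfactor : ∀ i ∈ range r, couponMgf x t i ≤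
      exp (t * (x - i)⁻¹ + t ^ 2 * (x - i)⁻¹ ^ 2 / (2 * (1 - t / (x - r)))) := by
    intro i hi
    have hxi := hdist i hi
    have hy : t * (x - i)⁻¹ ≤ t / (x - r) := by
      rw [← div_eq_mul_inv]; exact div_le_div_of_nonneg_left ht0 hm hxi
    have hy0 : 0 ≤ t * (x - i)⁻¹ := mul_nonneg ht0 (inv_nonneg.2 (hm.le.trans hxi))
    calc couponMgf x t i = (1 - t * (x - i)⁻¹)⁻¹ := by
          unfold couponMgf
          have : x - i ≠ 0 := (hm.trans_le hxi).ne'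
          field_simp
      _ ≤ exp (t * (x - i)⁻¹ + (t * (x - i)⁻¹) ^ 2 / (2 * (1 - t * (x - i)⁻¹))) :=
          inv_one_sub_le_exp hy0 (hy.trans_lt hρ)
      _ ≤ _ := by
          rw [mul_pow]
          gcongr
  calc ∏ i ∈ range r, couponMgf x t i
      ≤ ∏ i ∈ range r, exp (t * (x - i)⁻¹ + t ^ 2 * (x - i)⁻¹ ^ 2 / (2 * (1 - t / (x - r)))) :=
        prod_le_prod (fun i hi ↦ (one_le_couponMgf ht0 (ht.trans_le (hdist i hi))).trans' zero_le_one)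
          hfactor
    _ = exp (t * ∑ i ∈ range r, (x - i)⁻¹ +
          t ^ 2 * (∑ i ∈ range r, (x - i)⁻¹ ^ 2) / (2 * (1 - t / (x - r)))) := by
        rw [← exp_sum, sum_add_distrib, mul_sum, mul_sum, sum_div]
    _ ≤ _ := by
        have hr : (r : ℝ) < x := by linarith
        gcongr
        · exact sum_range_inv_sub_le_log hr
        · exact sum_range_inv_sub_sq_le hr

lemma Fin.univ_image_cons {α : Type*} [DecidableEq α] {n : ℕ} (x : α) (g : Fin n → α) :
    univ.image (Fin.cons x g : Fin (n + 1) → α) = insert x (univ.image g) := by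
  ext; simp [Fin.exists_fin_succ, eq_comm]

lemma card_filter_fin_succ {α : Type*} [Fintype α] {n : ℕ} (p : (Fin (n + 1) → α) → Prop)
    [DecidablePred p] :
    #{f | p f} = ∑ x, #{g : Fin n → α | p (Fin.cons x g)} := by
  simp only [card_filter]
  rw [← Fintype.sum_prod_type', ← (Fin.consEquiv fun _ ↦ α).sum_comp]
  rfl

lemma Finset.sum_le_card_mul_add_card_compl_mul {α : Type*} [Fintype α] [DecidableEq α]
    (S : Finset α) {c : α → ℝ} {A B : ℝ} (hA : ∀ x ∈ S, c x ≤ A) (hB : ∀ x ∉ S, c x ≤ B) :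
    ∑ x, c x ≤ #S * A + (Fintype.card α - #S) * B := by
  rw [← sum_add_sum_compl S]
  gcongr
  · simpa using sum_le_card_nsmul S c A hA
  · simpa [card_compl, Nat.cast_sub (card_le_univ S)] using
      sum_le_card_nsmul Sᶜ c B fun x hx ↦ hB x (mem_compl.1 hx)

section
variable {α : Type*} [Fintype α] [DecidableEq α]

theorem card_filter_card_union_image_lt_le {r : ℕ} {t : ℝ} (ht0 : 0 ≤ t)
    (ht : t < Fintype.card α - r) (n : ℕ) (S : Finset α) :
    (#{f : Fin n → α | #(S ∪ univ.image f) < r} : ℝ) ≤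
      (Fintype.card α - t) ^ n * ∏ i ∈ Ico #S r, couponMgf (Fintype.card α) t i := by
  set K := Fintype.card α
  induction n generalizing S with
  | zero =>
    calc (#{f : Fin 0 → α | #(S ∪ univ.image f) < r} : ℝ) ≤ 1 := by
          exact_mod_cast (card_filter_le _ _).trans_eq (by simp)
      _ ≤ _ := by simpa using one_le_prod_couponMgf ht0 ht #S
  | succ n ih =>
    have hKt : 0 ≤ K - t := by linarith [(Nat.cast_nonneg r : (0 : ℝ) ≤ r)]
    rcases le_or_gt r #S with hrS | hSr
    · rw [filter_false_of_mem fun f _ ↦ not_lt.2 (hrS.trans (card_le_card subset_union_left)),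
        card_empty, Nat.cast_zero]
      exact mul_nonneg (pow_nonneg hKt _) (zero_le_one.trans (one_le_prod_couponMgf ht0 ht _))
    set Q := (K - t) ^ n * ∏ i ∈ Ico (#S + 1) r, couponMgf K t i
    have hfibre : ∀ x,
        (#{g : Fin n → α | #(S ∪ univ.image (Fin.cons x g : Fin (n + 1) → α)) < r} : ℝ) ≤
          (K - t) ^ n * ∏ i ∈ Ico #(insert x S) r, couponMgf K t i := fun x ↦ by
      simpa only [Fin.univ_image_cons, union_insert, ← insert_union] using ih (insert x S)
    have hsplit : ∏ i ∈ Ico #S r, couponMgf K t i =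
        couponMgf K t #S * ∏ i ∈ Ico (#S + 1) r, couponMgf K t i := by
      rw [← insert_Ico_add_one_left_eq_Ico hSr, prod_insert (by simp)]
    -- Split on the first sample `x`: it repeats a coupon of `S` in `#S` cases, else it is new.
    rw [card_filter_fin_succ, Nat.cast_sum, hsplit, pow_succ]
    calc _ ≤ #S * (couponMgf K t #S * Q) + (K - #S) * Q := by
          refine sum_le_card_mul_add_card_compl_mul S (fun x hx ↦ ?_) (fun x hx ↦ ?_)
          · simpa [insert_eq_of_mem hx, hsplit, Q, mul_left_comm] using hfibre x
          · simpa [card_insert_of_notMem hx, Q] using hfibre x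
      _ = _ := by
          have hd : t < K - #S := by
            have : ((#S : ℕ) : ℝ) < r := by exact_mod_cast hSr
            linarith
          linear_combination Q * couponMgf_step hd

theorem card_filter_card_image_lt_le_exp {M : ℕ} (hM : 0 < M) (hMK : M ≤ Fintype.card α) (n : ℕ)
    {u : ℝ} (hu0 : 0 ≤ u) (hu : u * Fintype.card α < M) :
    (#{f : Fin n → α | #(univ.image f) < Fintype.card α - M} : ℝ) ≤
      Fintype.card α ^ n * exp (u * (Fintype.card α * log (Fintype.card α / M) - n) +
        u ^ 2 * (Fintype.card α * (Fintype.card α / M) * log (Fintype.card α / M)) /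
          (2 * (1 - u * (Fintype.card α / M)))) := by
  set K := Fintype.card α
  have hM0 : (0 : ℝ) < M := by exact_mod_cast hM
  have hK0 : (0 : ℝ) < K := by exact_mod_cast hM.trans_le hMK
  have hr : ((K - M : ℕ) : ℝ) = K - M := Nat.cast_sub hMK
  have ht : u * K < K - (K - M : ℕ) := by rw [hr]; linarith
  have ht0 : 0 ≤ u * K := mul_nonneg hu0 hK0.le
  have hcount := card_filter_card_union_image_lt_le ht0 ht n ∅
  have hprod_nonneg := zero_le_one.trans (one_le_prod_couponMgf ht0 ht 0)
  simp only [card_empty, empty_union, ← range_eq_Ico] at hcount hprod_nonneg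
  have hprod := prod_couponMgf_le_exp ht0 ht
  rw [hr, sub_sub_cancel, ← log_div hK0.ne' hM0.ne', mul_div_assoc u] at hprod
  have hpow : ((K : ℝ) - u * K) ^ n ≤ K ^ n * exp (-(u * n)) := by
    rw [show (K : ℝ) - u * K = K * (1 - u) by ring, mul_pow,
      show -(u * n) = n * (-u) by ring, exp_nat_mul]
    have hu1 : u ≤ 1 := by nlinarith [(Nat.cast_le (α := ℝ)).2 hMK]
    gcongr
    linarith [add_one_le_exp (-u)]
  have hvar : (u * K) ^ 2 * ((M : ℝ)⁻¹ - (K : ℝ)⁻¹) / (2 * (1 - u * (K / M))) ≤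
      u ^ 2 * (K * (K / M) * log (K / M)) / (2 * (1 - u * (K / M))) := by
    have hden : 0 < 1 - u * (K / M) := by
      rw [← mul_div_assoc, sub_pos, div_lt_one hM0]; exact hu
    refine div_le_div_of_nonneg_right ?_ (by linarith)
    calc (u * K) ^ 2 * ((M : ℝ)⁻¹ - (K : ℝ)⁻¹) ≤ (u * K) ^ 2 * (log (K / M) / M) := by
          gcongr; exact inv_sub_inv_le_log_div_div hM0 hK0
      _ = _ := by ring
  calc _ ≤ ((K : ℝ) - u * K) ^ n * ∏ i ∈ range (K - M), couponMgf K (u * K) i := hcount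
    _ ≤ K ^ n * exp (-(u * n)) * exp (u * K * log (K / M) +
          (u * K) ^ 2 * ((M : ℝ)⁻¹ - (K : ℝ)⁻¹) / (2 * (1 - u * (K / M)))) :=
        mul_le_mul hpow hprod hprod_nonneg (by positivity)
    _ ≤ _ := by
        rw [mul_assoc, ← exp_add]
        exact mul_le_mul_of_nonneg_left (exp_le_exp.2 (by linarith)) (by positivity)

theorem card_filter_card_image_lt_le_mul_pow {M : ℕ} (hM : 0 < M) (hMK : M < Fintype.card α)
    {δ : ℝ} (hδ0 : 0 < δ) (hδ1 : δ ≤ 1) {n : ℕ}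
    (hn : Fintype.card α * log (Fintype.card α / M) + Fintype.card α / M * log (1 / δ) +
      √(2 * (Fintype.card α * (Fintype.card α / M) * log (Fintype.card α / M)) * log (1 / δ))
        ≤ n) :
    (#{f : Fin n → α | #(univ.image f) < Fintype.card α - M} : ℝ) ≤ δ * Fintype.card α ^ n := by
  set K := Fintype.card α
  have hM0 : (0 : ℝ) < M := by exact_mod_cast hM
  have hK0 : (0 : ℝ) < K := by exact_mod_cast hM.trans hMK
  have hc : (0 : ℝ) < K / M := div_pos hK0 hM0
  have hlog : 0 < log (K / M) := log_pos ((one_lt_div hM0).2 (by exact_mod_cast hMK))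
  obtain ⟨u, hu0, huc, hexp⟩ := exists_subGamma_exponent_le (by positivity) hc
    (log_nonneg ((one_le_div hδ0).2 hδ1)) hn
  rw [← mul_div_assoc, div_lt_one hM0] at huc
  refine (card_filter_card_image_lt_le_exp hM hMK.le n hu0 huc).trans ?_
  rw [mul_comm, ← exp_log hδ0, ← neg_neg (log δ), ← log_inv, ← one_div]
  gcongr

end

lemma one_sub_le_card_filter_div {β : Type*} [Fintype β] (p : β → Prop) [DecidablePred p]
    {δ : ℝ} (hβ : 0 < Fintype.card β) (h : (#{x | ¬p x} : ℝ) ≤ δ * Fintype.card β) :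
    1 - δ ≤ #{x | p x} / Fintype.card β := by
  have htotal : (#{x | p x} : ℝ) + #{x | ¬p x} = Fintype.card β := by
    exact_mod_cast card_filter_add_card_filter_not (s := univ) p
  rw [le_div_iff₀ (by exact_mod_cast hβ)]
  linarith

/-- Partial coupon collection: over `K` coupons with `ψ = M/K ∈ (0, 1/2]`, after
`K ln(1/ψ) + ψ⁻¹ ln(1/δ) + √(2K ψ⁻¹ ln(1/ψ) ln(1/δ))` uniform samples, with probability
at least `1 − δ` all but at most `ψK = M` coupons have been collected. -/
theorem stmt_11 (K M : ℕ) (hK : 0 < K) (hM : 0 < M) (δ : ℝ) (hδ : δ ∈ Set.Ioo (0 : ℝ) 1)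
    (ψ : ℝ) (hψ : ψ = (M : ℝ) / K) (hψhalf : ψ ≤ 1 / 2)
    (n : ℕ)
    (hn : n = ⌈(K : ℝ) * Real.log (1 / ψ) + ψ⁻¹ * Real.log (1 / δ) +
        Real.sqrt (2 * K * ψ⁻¹ * Real.log (1 / ψ) * Real.log (1 / δ))⌉₊) :
    1 - δ ≤
      ((Finset.univ.filter (fun f : Fin n → Fin K =>
          K - M ≤ (Finset.univ.image f).card)).card : ℝ) / (K : ℝ) ^ n := by
  have hK0 : (0 : ℝ) < K := by exact_mod_cast hK
  have hψinv : ψ⁻¹ = K / M := by rw [hψ, inv_div]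
  have hMK : M < K := by
    rw [hψ, div_le_iff₀ hK0] at hψhalf
    exact_mod_cast (by linarith [(Nat.cast_pos (α := ℝ)).2 hM] : (M : ℝ) < K)
  have hn' : K * log (K / M) + K / M * log (1 / δ) +
      √(2 * (K * (K / M) * log (K / M)) * log (1 / δ)) ≤ n := by
    refine le_of_eq_of_le ?_ (hn ▸ Nat.le_ceil _)
    rw [one_div ψ, hψinv]
    ring_nf
  have hbad := card_filter_card_image_lt_le_mul_pow (α := Fin K) hM (by simpa using hMK)
    hδ.1 hδ.2.le (by simpa using hn')
  simpa using one_sub_le_card_filter_div (fun f : Fin n → Fin K ↦ K - M ≤ #(univ.image f))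
    (by simp [hK])
    (by simpa only [not_le, Fintype.card_fun, Fintype.card_fin, Nat.cast_pow] using hbad)
end
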